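/- arXiv:1202.0964 — 2 statements merged into one kernel-verified Lean document; each statement's English description precedes it below -/
import Mathlib

section
/- Let G be a simple graph of order n ≥ 2. Then q₂(G) = n − 2 if and only if the complement of G has a balanced bipartite component or at least two bipartite components. -/
open Matrix SimpleGraph
open scoped Classical

/-- The `k`-th largest eigenvalue (1-indexed, counted with multiplicity) of a real
symmetric (Hermitian) matrix; junk value `0` if `M` is not Hermitian or `k` is out of range. -/
noncomputable def kthEig {V : Type*} [Fintype V] [DecidableEq V]
    (M : Matrix V V ℝ) (k : ℕ) : ℝ :=
  if hM : M.IsHermitian then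
    if h : k - 1 < Fintype.card V then
      letI f : Fin (Fintype.card V) → ℝ := hM.eigenvalues ∘ (Fintype.equivFin V).symm
      (f ∘ Tuple.sort f) (Fin.rev ⟨k - 1, h⟩)
    else 0
  else 0

/-- The signless Laplacian `Q(G) = D(G) + A(G)` of a simple graph `G`. -/
noncomputable def signlessLap {V : Type*} [Fintype V] [DecidableEq V]
    (G : SimpleGraph V) [DecidableRel G.Adj] : Matrix V V ℝ :=
  G.degMatrix ℝ + G.adjMatrix ℝ

/-- `qEig G k` is the `k`-th largest signless Laplacian eigenvalue `q_k(G)`. -/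
noncomputable def qEig {V : Type*} [Fintype V] [DecidableEq V]
    (G : SimpleGraph V) [DecidableRel G.Adj] (k : ℕ) : ℝ :=
  kthEig (signlessLap G) k

/-- `c` is a bipartite connected component of `H`: the vertex set of the component splits
into two disjoint classes `U`, `W` such that every edge of the component joins `U` and `W`. -/
def IsBipartiteComponent {V : Type*} (H : SimpleGraph V) (c : H.ConnectedComponent) : Prop :=
  ∃ U W : Set V, U ∪ W = c.supp ∧ Disjoint U W ∧
    ∀ ⦃u v : V⦄, u ∈ c.supp → H.Adj u v → (u ∈ U ∧ v ∈ W) ∨ (u ∈ W ∧ v ∈ U)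

/-- `c` is a balanced bipartite connected component of `H`: bipartite with vertex classes
of equal size. -/
def IsBalancedBipartiteComponent {V : Type*} (H : SimpleGraph V)
    (c : H.ConnectedComponent) : Prop :=
  ∃ U W : Set V, U ∪ W = c.supp ∧ Disjoint U W ∧ U.ncard = W.ncard ∧
    ∀ ⦃u v : V⦄, u ∈ c.supp → H.Adj u v → (u ∈ U ∧ v ∈ W) ∨ (u ∈ W ∧ v ∈ U)

/-- `G` is the complete multipartite graph whose parts are the fibers of `p`:
two vertices are adjacent iff they lie in different parts. -/
def IsCompleteMultipartiteWith {V ι : Type*} (G : SimpleGraph V) (p : V → ι) : Prop :=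
  ∀ u v : V, G.Adj u v ↔ p u ≠ p v

/-!
Since `Q(G) + Q(Gᶜ) = (n - 2) I + J`, we have `vᵀQ(G)v = (n - 2)‖v‖² + (∑ v)² - vᵀQ(Gᶜ)v`, where
`vᵀQ(Gᶜ)v = ∑_{ij ∈ E(Gᶜ)} (v_i + v_j)² ≥ 0` vanishes exactly when `v` changes sign along every
edge of `Gᶜ`.

The span of the top two eigenvectors of `Q(G)` contains some `v ≠ 0` with `∑ v = 0`, so
`q₂ ≤ n - 2`, and equality makes `v` change sign along the edges of `Gᶜ`: on each component it
meets, `v` is `±` a constant on the two classes. So either `v` meets two (bipartite) components,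
or only one, whose classes have equal size because `∑ v = 0`.

Conversely, the class indicators of a balanced component, or the `±1` vectors of two bipartite
components, span a plane on which `vᵀQ(Gᶜ)v ≤ (∑ v)²`, i.e. `vᵀQ(G)v ≥ (n - 2)‖v‖²`, so
`q₂ ≥ n - 2` by Courant–Fischer.
-/

theorem OrthonormalBasis.dotProduct_eq_sum {V : Type*} [Fintype V]
    (b : OrthonormalBasis V ℝ (EuclideanSpace ℝ V)) (x y : V → ℝ) :
    x ⬝ᵥ y = ∑ i, (⇑(b i) ⬝ᵥ x) * (⇑(b i) ⬝ᵥ y) := by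
  have := b.sum_inner_mul_inner (WithLp.toLp 2 x) (WithLp.toLp 2 y)
  simp only [EuclideanSpace.inner_eq_star_dotProduct, star_trivial] at this
  rw [dotProduct_comm, ← this]
  simp only [dotProduct_comm y]

theorem exists_smul_add_smul_ne_zero_dotProduct_eq_zero {V : Type*} [Fintype V] {x z : V → ℝ}
    (hxz : LinearIndependent ℝ ![x, z]) (u : V → ℝ) :
    ∃ a b : ℝ, a • x + b • z ≠ 0 ∧ u ⬝ᵥ (a • x + b • z) = 0 := by
  have hne {a b : ℝ} (h : a ≠ 0 ∨ b ≠ 0) : a • x + b • z ≠ 0 := fun h0 => by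
    obtain ⟨ha, hb⟩ := LinearIndependent.pair_iff.mp hxz a b h0
    tauto
  by_cases hx : u ⬝ᵥ x = 0
  · exact ⟨1, 0, hne (by simp), by simp [hx]⟩
  · refine ⟨u ⬝ᵥ z, -(u ⬝ᵥ x), hne (Or.inr (neg_ne_zero.mpr hx)), ?_⟩
    simp only [dotProduct_add, dotProduct_smul, smul_eq_mul]
    ring

theorem Set.sum_indicator_one_eq_ncard {V : Type*} [Fintype V] (s : Set V) :
    ∑ v, s.indicator (1 : V → ℝ) v = s.ncard := by
  classical
  simp [Set.indicator_apply, Finset.sum_boole, Set.ncard_eq_toFinset_card']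

theorem dotProduct_self_pos {V : Type*} [Fintype V] {v : V → ℝ} (hv : v ≠ 0) :
    0 < v ⬝ᵥ v := by
  simpa only [star_trivial] using dotProduct_star_self_pos_iff.mpr hv

theorem linearIndependent_pair_of_apply {V K : Type*} [Field K] {x z : V → K} {u w : V}
    (hxu : x u ≠ 0) (hzu : z u = 0) (hzw : z w ≠ 0) (hxw : x w = 0) :
    LinearIndependent K ![x, z] := by
  refine LinearIndependent.pair_iff.mpr fun s t h => ⟨?_, ?_⟩
  · simpa [hzu, hxu] using congrFun h u
  · simpa [hxw, hzw] using congrFun h w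

namespace Matrix.IsHermitian

variable {V : Type*} [Fintype V] {M : Matrix V V ℝ}

theorem kthEig_eq_eigenvalues₀ [DecidableEq V] (hM : M.IsHermitian) {k : ℕ}
    (hk : k - 1 < Fintype.card V) :
    kthEig M k = hM.eigenvalues₀ ⟨k - 1, hk⟩ := by
  -- Both sides read off a monotone rearrangement of the same tuple, and such rearrangements agree.
  set π : Equiv.Perm (Fin (Fintype.card V)) :=
    (Fintype.equivFin V).symm.trans (Fintype.equivOfCardEq (Fintype.card_fin _)).symm
  set f : Fin (Fintype.card V) → ℝ := hM.eigenvalues ∘ (Fintype.equivFin V).symm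
  have hsorted : hM.eigenvalues₀ ∘ ⇑(π * Tuple.sort f) = hM.eigenvalues₀ ∘ ⇑Fin.revPerm :=
    Tuple.unique_monotone (Tuple.monotone_sort f) (hM.eigenvalues₀_antitone.comp Fin.rev_anti)
  rw [kthEig, dif_pos hM, dif_pos hk]
  exact (congrFun hsorted (Fin.rev ⟨k - 1, hk⟩)).trans (by simp)

theorem dotProduct_mulVec_comm (hM : M.IsHermitian) (x y : V → ℝ) :
    x ⬝ᵥ (M *ᵥ y) = (M *ᵥ x) ⬝ᵥ y := by
  rw [dotProduct_mulVec, ← mulVec_transpose, ← conjTranspose_eq_transpose_of_trivial, hM.eq,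
    dotProduct_comm]

theorem dotProduct_mulVec_eq_sum [DecidableEq V] (hM : M.IsHermitian) (v : V → ℝ) :
    v ⬝ᵥ (M *ᵥ v) = ∑ i, hM.eigenvalues i * (⇑(hM.eigenvectorBasis i) ⬝ᵥ v) ^ 2 := by
  rw [hM.eigenvectorBasis.dotProduct_eq_sum]
  refine Finset.sum_congr rfl fun i _ => ?_
  rw [hM.dotProduct_mulVec_comm, mulVec_eigenvectorBasis, smul_dotProduct, smul_eq_mul]
  ring

section SecondEigenvalue

variable [DecidableEq V]

theorem exists_kthEig_two_mul_le (hM : M.IsHermitian) (h2 : 2 ≤ Fintype.card V) (u : V → ℝ) :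
    ∃ v ≠ 0, u ⬝ᵥ v = 0 ∧ kthEig M 2 * (v ⬝ᵥ v) ≤ v ⬝ᵥ (M *ᵥ v) := by
  let e := Fintype.equivOfCardEq (Fintype.card_fin (Fintype.card V))
  have hsecond : kthEig M 2 = hM.eigenvalues₀ ⟨1, by omega⟩ := hM.kthEig_eq_eigenvalues₀ _
  have hb (i j : V) :
      ⇑(hM.eigenvectorBasis i) ⬝ᵥ ⇑(hM.eigenvectorBasis j) = if i = j then 1 else 0 := by
    simpa [EuclideanSpace.inner_eq_star_dotProduct, dotProduct_comm] using
      orthonormal_iff_ite.mp hM.eigenvectorBasis.orthonormal i j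
  -- `hM.eigenvalues i = hM.eigenvalues₀ (e.symm i)`: `i₀`, `i₁` carry the two largest ones.
  let i₀ := e ⟨0, by omega⟩
  let i₁ := e ⟨1, by omega⟩
  have hi₀₁ : i₀ ≠ i₁ := e.injective.ne (by simp)
  have hind : LinearIndependent ℝ ![⇑(hM.eigenvectorBasis i₀), ⇑(hM.eigenvectorBasis i₁)] := by
    refine LinearIndependent.pair_iff.mpr fun s t hst => ?_
    have h₀ := congrArg (⇑(hM.eigenvectorBasis i₀) ⬝ᵥ ·) hst
    have h₁ := congrArg (⇑(hM.eigenvectorBasis i₁) ⬝ᵥ ·) hst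
    simp only [dotProduct_add, dotProduct_smul, hb, hi₀₁, hi₀₁.symm] at h₀ h₁
    simpa using And.intro h₀ h₁
  obtain ⟨s, t, hv, hu⟩ := exists_smul_add_smul_ne_zero_dotProduct_eq_zero hind u
  refine ⟨_, hv, hu, ?_⟩
  rw [hM.dotProduct_mulVec_eq_sum, hM.eigenvectorBasis.dotProduct_eq_sum, Finset.mul_sum]
  refine Finset.sum_le_sum fun i _ => ?_
  rw [← sq, hsecond]
  by_cases hi : i = i₀ ∨ i = i₁
  · gcongr
    refine hM.eigenvalues₀_antitone (Fin.le_def.mpr ?_)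
    rcases hi with rfl | rfl <;> simp [i₀, i₁, e]
  · simp only [not_or] at hi
    simp [dotProduct_add, dotProduct_smul, hb, hi]

theorem le_kthEig_two (hM : M.IsHermitian) (h2 : 2 ≤ Fintype.card V) {x z : V → ℝ}
    (hxz : LinearIndependent ℝ ![x, z]) {c : ℝ}
    (hc : ∀ a b : ℝ, c * ((a • x + b • z) ⬝ᵥ (a • x + b • z)) ≤
      (a • x + b • z) ⬝ᵥ (M *ᵥ (a • x + b • z))) :
    c ≤ kthEig M 2 := by
  let e := Fintype.equivOfCardEq (Fintype.card_fin (Fintype.card V))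
  have hsecond : kthEig M 2 = hM.eigenvalues₀ ⟨1, by omega⟩ := hM.kthEig_eq_eigenvalues₀ _
  let i₀ := e ⟨0, by omega⟩
  obtain ⟨a, b, hv, hv₀⟩ :=
    exists_smul_add_smul_ne_zero_dotProduct_eq_zero hxz ⇑(hM.eigenvectorBasis i₀)
  set v := a • x + b • z
  have hquad : v ⬝ᵥ (M *ᵥ v) ≤ kthEig M 2 * (v ⬝ᵥ v) := by
    rw [hM.dotProduct_mulVec_eq_sum, hM.eigenvectorBasis.dotProduct_eq_sum, Finset.mul_sum]
    refine Finset.sum_le_sum fun i _ => ?_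
    by_cases hi : i = i₀
    · simp [hi, hv₀]
    · rw [← sq, hsecond]
      gcongr
      exact hM.eigenvalues₀_antitone <| Fin.mk_le_of_le_val <|
        Nat.one_le_iff_ne_zero.mpr fun h => hi (e.symm_apply_eq.mp (Fin.ext h))
  exact le_of_mul_le_mul_right ((hc a b).trans hquad) (dotProduct_self_pos hv)

end SecondEigenvalue

end Matrix.IsHermitian

namespace SimpleGraph

open Finset

section SignAlternating

variable {V : Type*} {G : SimpleGraph V}

def IsSignAlternating (G : SimpleGraph V) (x : V → ℝ) : Prop :=
  ∀ ⦃i j : V⦄, G.Adj i j → x j = -x i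

theorem IsSignAlternating.smul_add_smul {x z : V → ℝ}
    (hx : G.IsSignAlternating x) (hz : G.IsSignAlternating z) (a b : ℝ) :
    G.IsSignAlternating (a • x + b • z) := fun i j h => by
  simp only [Pi.add_apply, Pi.smul_apply, smul_eq_mul, hx h, hz h]
  ring

theorem IsSignAlternating.eq_or_eq_neg_of_reachable {x : V → ℝ}
    (hx : G.IsSignAlternating x) {u v : V} (h : G.Reachable u v) : x v = x u ∨ x v = -x u := by
  obtain ⟨p⟩ := h
  induction p with
  | nil => exact .inl rfl
  | cons hadj _ ih =>
    rw [hx hadj, neg_neg] at ih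
    exact ih.symm

def ConnectedComponent.IsBipartition (c : G.ConnectedComponent) (U W : Set V) : Prop :=
  U ∪ W = c.supp ∧ Disjoint U W ∧
    ∀ ⦃u v : V⦄, u ∈ c.supp → G.Adj u v → (u ∈ U ∧ v ∈ W) ∨ (u ∈ W ∧ v ∈ U)

theorem isBipartiteComponent_iff {c : G.ConnectedComponent} :
    IsBipartiteComponent G c ↔ ∃ U W : Set V, c.IsBipartition U W :=
  Iff.rfl

theorem isBalancedBipartiteComponent_iff {c : G.ConnectedComponent} :
    IsBalancedBipartiteComponent G c ↔
      ∃ U W : Set V, c.IsBipartition U W ∧ U.ncard = W.ncard := by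
  simp only [IsBalancedBipartiteComponent, ConnectedComponent.IsBipartition]
  grind

namespace ConnectedComponent

variable {c : G.ConnectedComponent} {U W : Set V}

theorem IsBipartition.adj_cases (h : c.IsBipartition U W) {i j : V} (hij : G.Adj i j) :
    (i ∈ U ∧ j ∈ W) ∨ (i ∈ W ∧ j ∈ U) ∨ (i ∉ U ∧ i ∉ W ∧ j ∉ U ∧ j ∉ W) := by
  obtain ⟨hUW, -, hedge⟩ := h
  by_cases hi : i ∈ c.supp
  · grind
  · have hj : j ∉ c.supp := fun hj => hi (c.mem_supp_of_adj_mem_supp hj hij.symm)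
    rw [← hUW] at hi hj
    grind

theorem IsBipartition.isSignAlternating (h : c.IsBipartition U W) :
    G.IsSignAlternating (U.indicator 1 - W.indicator 1) := fun i j hij => by
  have hUW := Set.disjoint_left.mp h.2.1
  have hWU := Set.disjoint_right.mp h.2.1
  rcases h.adj_cases hij with ⟨hi, hj⟩ | ⟨hi, hj⟩ | ⟨hiU, hiW, hjU, hjW⟩
  · simp [hi, hj, hUW hi, hWU hj]
  · simp [hi, hj, hWU hi, hUW hj]
  · simp [hiU, hiW, hjU, hjW]

theorem IsBipartition.indicator_sub_indicator_apply_eq_zero_iff (h : c.IsBipartition U W)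
    (v : V) : (U.indicator 1 - W.indicator 1 : V → ℝ) v = 0 ↔ v ∉ c.supp := by
  rw [← h.1]
  by_cases hU : v ∈ U
  · simp [hU, Set.disjoint_left.mp h.2.1 hU]
  · by_cases hW : v ∈ W <;> simp [hU, hW]

end ConnectedComponent

theorem IsSignAlternating.isBipartition {x : V → ℝ} (hx : G.IsSignAlternating x) {v : V}
    (hv : x v ≠ 0) :
    (G.connectedComponentMk v).IsBipartition
      {u | u ∈ (G.connectedComponentMk v).supp ∧ x u = x v}
      {u | u ∈ (G.connectedComponentMk v).supp ∧ x u = -x v} := by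
  set c := G.connectedComponentMk v
  have hsign {u : V} (hu : u ∈ c.supp) : x u = x v ∨ x u = -x v :=
    hx.eq_or_eq_neg_of_reachable (c.reachable_of_mem_supp rfl hu)
  refine ⟨?_, ?_, fun u w hu huw => ?_⟩
  · ext u
    simp only [Set.mem_union, Set.mem_ofPred_eq, ← and_or_left]
    exact and_iff_left_of_imp hsign
  · exact Set.disjoint_left.mpr fun u ⟨_, hu⟩ ⟨_, hu'⟩ => hv (by linarith)
  · have hw := c.mem_supp_of_adj_mem_supp hu huw
    rcases hsign hu with h | h
    · exact .inl ⟨⟨hu, h⟩, hw, by rw [hx huw, h]⟩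
    · exact .inr ⟨⟨hu, h⟩, hw, by rw [hx huw, h, neg_neg]⟩

end SignAlternating

section Finite

variable {V : Type*} [Fintype V] [DecidableEq V]

theorem isHermitian_signlessLap (G : SimpleGraph V) [DecidableRel G.Adj] :
    (signlessLap G).IsHermitian :=
  (isHermitian_degMatrix ℝ G).add (isHermitian_adjMatrix ℝ G)

theorem dotProduct_mulVec_signlessLap (G : SimpleGraph V) [DecidableRel G.Adj] (x : V → ℝ) :
    x ⬝ᵥ (signlessLap G *ᵥ x) =
      (∑ i : V, ∑ j : V, if G.Adj i j then (x i + x j) ^ 2 else 0) / 2 := by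
  simp_rw [signlessLap, add_mulVec, dotProduct_add, dotProduct_mulVec_degMatrix,
    dotProduct_mulVec_adjMatrix, ← sum_add_distrib, degree_eq_sum_if_adj, sum_mul, ite_mul,
    one_mul, zero_mul, ← sum_add_distrib, ite_add_ite, add_zero]
  rw [← add_self_div_two (∑ i : V, ∑ j : V, _)]
  conv_lhs => enter [1, 2, 2, i, 2, j]; rw [if_congr (adj_comm G i j) rfl rfl]
  conv_lhs => enter [1, 2]; rw [Finset.sum_comm]
  simp_rw [← sum_add_distrib, ite_add_ite]
  congr 2 with i
  congr 2 with j
  ring_nf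

theorem dotProduct_mulVec_signlessLap_nonneg (G : SimpleGraph V) [DecidableRel G.Adj]
    (x : V → ℝ) : 0 ≤ x ⬝ᵥ (signlessLap G *ᵥ x) := by
  rw [dotProduct_mulVec_signlessLap]
  positivity

theorem dotProduct_mulVec_signlessLap_eq_zero_iff (G : SimpleGraph V) [DecidableRel G.Adj]
    (x : V → ℝ) : x ⬝ᵥ (signlessLap G *ᵥ x) = 0 ↔ G.IsSignAlternating x := by
  simp (disch := intros; positivity) [dotProduct_mulVec_signlessLap, sum_eq_zero_iff_of_nonneg,
    IsSignAlternating, add_eq_zero_iff_eq_neg']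

theorem signlessLap_add_signlessLap_compl (G : SimpleGraph V) [DecidableRel G.Adj] :
    signlessLap G + signlessLap Gᶜ = ((Fintype.card V : ℝ) - 2) • 1 + of fun _ _ => 1 := by
  ext i j
  by_cases hij : i = j
  · subst hij
    have hdeg := G.degree_lt_card_verts i
    have hsum : (G.degree i + Gᶜ.degree i : ℝ) = Fintype.card V - 1 := by
      rw [degree_compl, Nat.cast_sub (Nat.le_sub_one_of_lt hdeg), Nat.cast_sub (by omega)]
      ring
    simp only [signlessLap, degMatrix, Matrix.add_apply, diagonal_apply_eq, adjMatrix_apply,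
      SimpleGraph.irrefl, ↓reduceIte, add_zero, Matrix.smul_apply, one_apply_eq, smul_eq_mul,
      mul_one, of_apply]
    linarith
  · by_cases h : G.Adj i j <;> simp [signlessLap, degMatrix, adjMatrix_apply, hij, h]

theorem dotProduct_mulVec_signlessLap_add_compl (G : SimpleGraph V) [DecidableRel G.Adj]
    (x : V → ℝ) :
    x ⬝ᵥ (signlessLap G *ᵥ x) + x ⬝ᵥ (signlessLap Gᶜ *ᵥ x) =
      ((Fintype.card V : ℝ) - 2) * (x ⬝ᵥ x) + (∑ i, x i) ^ 2 := by
  rw [← dotProduct_add, ← add_mulVec, signlessLap_add_signlessLap_compl, add_mulVec,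
    dotProduct_add, smul_mulVec, one_mulVec, dotProduct_smul, smul_eq_mul]
  simp [dotProduct, mulVec, sq, Finset.mul_sum, mul_comm]

theorem ConnectedComponent.IsBipartition.dotProduct_mulVec_signlessLap_le
    {G : SimpleGraph V} [DecidableRel G.Adj] {c : G.ConnectedComponent} {U W : Set V}
    (h : c.IsBipartition U W) (a b : ℝ) :
    (a • U.indicator 1 + b • W.indicator 1) ⬝ᵥ
        (signlessLap G *ᵥ (a • U.indicator 1 + b • W.indicator 1)) ≤
      (a + b) ^ 2 * (U.ncard * W.ncard) := by
  set y : V → ℝ := a • U.indicator 1 + b • W.indicator 1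
  have hUW := Set.disjoint_left.mp h.2.1
  have hWU := Set.disjoint_right.mp h.2.1
  have hterm (i j : V) : (if G.Adj i j then (y i + y j) ^ 2 else 0) ≤
      (a + b) ^ 2 * (U.indicator 1 i * W.indicator 1 j + W.indicator 1 i * U.indicator 1 j) := by
    by_cases hij : G.Adj i j
    · -- an edge meeting `U ∪ W` joins `U` to `W`, and then `y i + y j = a + b`
      rcases h.adj_cases hij with ⟨hi, hj⟩ | ⟨hi, hj⟩ | ⟨hiU, hiW, hjU, hjW⟩
      · simp [y, hij, hi, hj, hUW hi, hWU hj]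
      · simp [y, hij, hi, hj, hWU hi, hUW hj, add_comm]
      · simp [y, hij, hiU, hiW, hjU, hjW]
    · have hnn (s : Set V) (i : V) : 0 ≤ s.indicator (1 : V → ℝ) i :=
        Set.indicator_nonneg (fun _ _ => zero_le_one) i
      rw [if_neg hij]
      exact mul_nonneg (sq_nonneg _)
        (add_nonneg (mul_nonneg (hnn U i) (hnn W j)) (mul_nonneg (hnn W i) (hnn U j)))
  rw [dotProduct_mulVec_signlessLap]
  calc _ ≤ (∑ i, ∑ j, (a + b) ^ 2 *
          (U.indicator 1 i * W.indicator 1 j + W.indicator 1 i * U.indicator 1 j)) / 2 := by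
        gcongr with i _ j _
        exact hterm i j
    _ = (a + b) ^ 2 * (U.ncard * W.ncard) := by
        simp only [← mul_sum, mul_add, sum_add_distrib, ← sum_mul,
          Set.sum_indicator_one_eq_ncard]
        ring

theorem IsSignAlternating.exists_bipartiteComponents {G : SimpleGraph V} {x : V → ℝ}
    (hx : G.IsSignAlternating x) (hx0 : x ≠ 0) (hsum : ∑ v, x v = 0) :
    (∃ c, IsBalancedBipartiteComponent G c) ∨
      ∃ c₁ c₂ : G.ConnectedComponent, c₁ ≠ c₂ ∧
        IsBipartiteComponent G c₁ ∧ IsBipartiteComponent G c₂ := by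
  obtain ⟨v, hv⟩ := Function.ne_iff.mp hx0
  by_cases hsep : ∃ w, x w ≠ 0 ∧ G.connectedComponentMk w ≠ G.connectedComponentMk v
  · obtain ⟨w, hw, hne⟩ := hsep
    exact .inr ⟨_, _, hne, ⟨_, _, hx.isBipartition hw⟩, ⟨_, _, hx.isBipartition hv⟩⟩
  push Not at hsep
  -- now `x` vanishes off the component `c` of `v`, where it is `± x v`
  set c := G.connectedComponentMk v
  set U := {u | u ∈ c.supp ∧ x u = x v}
  set W := {u | u ∈ c.supp ∧ x u = -x v}
  have hbip : c.IsBipartition U W := hx.isBipartition hv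
  have hx_eq : x = x v • (U.indicator 1 - W.indicator 1) := by
    ext u
    by_cases hU : u ∈ U
    · simp [hU, Set.disjoint_left.mp hbip.2.1 hU, hU.2]
    by_cases hW : u ∈ W
    · simp [hW, hU, hW.2]
    have hu : x u = 0 := by
      by_contra hu
      have : u ∈ U ∪ W := hbip.1 ▸ hsep u hu
      exact this.elim hU hW
    simp [hU, hW, hu]
  have hcard : x v * ((U.ncard : ℝ) - W.ncard) = 0 := calc
    _ = ∑ u, (x v • (U.indicator 1 - W.indicator 1) : V → ℝ) u := by
      simp [← mul_sum, sum_sub_distrib, Set.sum_indicator_one_eq_ncard]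
    _ = 0 := by rw [← hx_eq, hsum]
  refine .inl ⟨c, isBalancedBipartiteComponent_iff.mpr ⟨U, W, hbip, ?_⟩⟩
  exact_mod_cast sub_eq_zero.mp ((mul_eq_zero.mp hcard).resolve_left hv)

theorem IsBalancedBipartiteComponent.exists_linearIndependent_signlessLap_le
    {G : SimpleGraph V} [DecidableRel G.Adj] {c : G.ConnectedComponent}
    (hc : IsBalancedBipartiteComponent G c) :
    ∃ x z : V → ℝ, LinearIndependent ℝ ![x, z] ∧ ∀ a b : ℝ,
      (a • x + b • z) ⬝ᵥ (signlessLap G *ᵥ (a • x + b • z)) ≤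
        (∑ v, (a • x + b • z) v) ^ 2 := by
  obtain ⟨U, W, hbip, hcard⟩ := isBalancedBipartiteComponent_iff.mp hc
  have hpos : U.ncard ≠ 0 := fun h0 => by
    have hU : U = ∅ := (Set.ncard_eq_zero).mp h0
    have hW : W = ∅ := (Set.ncard_eq_zero).mp (hcard ▸ h0)
    simpa [← hbip.1, hU, hW] using c.nonempty_supp
  obtain ⟨u, hu⟩ := Set.nonempty_of_ncard_ne_zero hpos
  obtain ⟨w, hw⟩ := Set.nonempty_of_ncard_ne_zero (hcard ▸ hpos)
  refine ⟨U.indicator 1, W.indicator 1, linearIndependent_pair_of_apply (u := u) (w := w)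
    (by simp [hu]) (by simp [Set.disjoint_left.mp hbip.2.1 hu]) (by simp [hw])
    (by simp [Set.disjoint_right.mp hbip.2.1 hw]), fun a b => ?_⟩
  have hsum : ∑ v, (a • U.indicator 1 + b • W.indicator 1 : V → ℝ) v = (a + b) * U.ncard := by
    simp [sum_add_distrib, ← mul_sum, Set.sum_indicator_one_eq_ncard, hcard, add_mul]
  calc _ ≤ (a + b) ^ 2 * (U.ncard * W.ncard) := hbip.dotProduct_mulVec_signlessLap_le a b
    _ = _ := by rw [hsum, hcard]; ring

theorem exists_linearIndependent_signlessLap_le_of_ne {G : SimpleGraph V} [DecidableRel G.Adj]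
    {c₁ c₂ : G.ConnectedComponent} (hne : c₁ ≠ c₂) (h₁ : IsBipartiteComponent G c₁)
    (h₂ : IsBipartiteComponent G c₂) :
    ∃ x z : V → ℝ, LinearIndependent ℝ ![x, z] ∧ ∀ a b : ℝ,
      (a • x + b • z) ⬝ᵥ (signlessLap G *ᵥ (a • x + b • z)) ≤
        (∑ v, (a • x + b • z) v) ^ 2 := by
  obtain ⟨U₁, W₁, hb₁⟩ := isBipartiteComponent_iff.mp h₁
  obtain ⟨U₂, W₂, hb₂⟩ := isBipartiteComponent_iff.mp h₂
  obtain ⟨v₁, hv₁⟩ := c₁.nonempty_supp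
  obtain ⟨v₂, hv₂⟩ := c₂.nonempty_supp
  refine ⟨U₁.indicator 1 - W₁.indicator 1, U₂.indicator 1 - W₂.indicator 1,
    linearIndependent_pair_of_apply (u := v₁) (w := v₂) ?_ ?_ ?_ ?_, fun a b => ?_⟩
  · rw [Ne, hb₁.indicator_sub_indicator_apply_eq_zero_iff, not_not]
    exact hv₁
  · exact (hb₂.indicator_sub_indicator_apply_eq_zero_iff v₁).mpr
      fun h => hne (ConnectedComponent.eq_of_common_vertex hv₁ h)
  · rw [Ne, hb₂.indicator_sub_indicator_apply_eq_zero_iff, not_not]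
    exact hv₂
  · exact (hb₁.indicator_sub_indicator_apply_eq_zero_iff v₂).mpr
      fun h => hne (ConnectedComponent.eq_of_common_vertex h hv₂)
  rw [(dotProduct_mulVec_signlessLap_eq_zero_iff G _).mpr
    (hb₁.isSignAlternating.smul_add_smul hb₂.isSignAlternating a b)]
  positivity

end Finite

section SecondEigenvalue

variable {V : Type*} [Fintype V] [DecidableEq V] (G : SimpleGraph V) [DecidableRel G.Adj]

theorem exists_dotProduct_mulVec_signlessLap_compl_le (h2 : 2 ≤ Fintype.card V) :
    ∃ v ≠ 0, ∑ i, v i = 0 ∧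
      v ⬝ᵥ (signlessLap Gᶜ *ᵥ v) ≤ ((Fintype.card V : ℝ) - 2 - qEig G 2) * (v ⬝ᵥ v) := by
  obtain ⟨v, hv0, hsum, hv⟩ := (isHermitian_signlessLap G).exists_kthEig_two_mul_le h2 1
  rw [one_dotProduct] at hsum
  have hsplit := G.dotProduct_mulVec_signlessLap_add_compl v
  rw [hsum] at hsplit
  refine ⟨v, hv0, hsum, ?_⟩
  unfold qEig
  linarith

theorem qEig_two_le (h2 : 2 ≤ Fintype.card V) : qEig G 2 ≤ Fintype.card V - 2 := by
  obtain ⟨v, hv0, -, hv⟩ := G.exists_dotProduct_mulVec_signlessLap_compl_le h2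
  have := le_of_mul_le_mul_right ((zero_mul _).trans_le
    ((Gᶜ.dotProduct_mulVec_signlessLap_nonneg v).trans hv)) (dotProduct_self_pos hv0)
  linarith

theorem exists_isSignAlternating_compl_of_qEig_two_eq (h2 : 2 ≤ Fintype.card V)
    (h : qEig G 2 = Fintype.card V - 2) :
    ∃ v ≠ 0, ∑ i, v i = 0 ∧ Gᶜ.IsSignAlternating v := by
  obtain ⟨v, hv0, hsum, hv⟩ := G.exists_dotProduct_mulVec_signlessLap_compl_le h2
  rw [h, sub_self, zero_mul] at hv
  exact ⟨v, hv0, hsum, (dotProduct_mulVec_signlessLap_eq_zero_iff _ _).mp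
    (hv.antisymm (Gᶜ.dotProduct_mulVec_signlessLap_nonneg v))⟩

theorem card_sub_two_le_qEig (h2 : 2 ≤ Fintype.card V) {x z : V → ℝ}
    (hxz : LinearIndependent ℝ ![x, z])
    (h : ∀ a b : ℝ, (a • x + b • z) ⬝ᵥ (signlessLap Gᶜ *ᵥ (a • x + b • z)) ≤
      (∑ v, (a • x + b • z) v) ^ 2) :
    (Fintype.card V : ℝ) - 2 ≤ qEig G 2 :=
  (isHermitian_signlessLap G).le_kthEig_two h2 hxz fun a b => by
    linarith [h a b, G.dotProduct_mulVec_signlessLap_add_compl (a • x + b • z)]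

end SecondEigenvalue

end SimpleGraph

/-- If `G` is a graph of order `n ≥ 2`, then `q₂(G) = n - 2` if and only if the complement
of `G` has a balanced bipartite component or at least two bipartite components. -/
theorem q2_eq_n_sub_two_iff (n : ℕ) (hn : 2 ≤ n)
    (G : SimpleGraph (Fin n)) [DecidableRel G.Adj] :
    qEig G 2 = (n : ℝ) - 2 ↔
      ((∃ c : Gᶜ.ConnectedComponent, IsBalancedBipartiteComponent Gᶜ c) ∨
       (∃ c₁ c₂ : Gᶜ.ConnectedComponent, c₁ ≠ c₂ ∧
          IsBipartiteComponent Gᶜ c₁ ∧ IsBipartiteComponent Gᶜ c₂)) := by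
  have h2 : 2 ≤ Fintype.card (Fin n) := by rwa [Fintype.card_fin]
  have hle := G.qEig_two_le h2
  rw [Fintype.card_fin] at hle
  constructor
  · intro h
    obtain ⟨v, hv0, hsum, hv⟩ :=
      G.exists_isSignAlternating_compl_of_qEig_two_eq h2 (by rwa [Fintype.card_fin])
    exact hv.exists_bipartiteComponents hv0 hsum
  · intro h
    obtain ⟨x, z, hxz, hq⟩ :=
      h.elim (fun ⟨_, hc⟩ => hc.exists_linearIndependent_signlessLap_le)
        fun ⟨_, _, hne, h₁, h₂⟩ => exists_linearIndependent_signlessLap_le_of_ne hne h₁ h₂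
    have hge := G.card_sub_two_le_qEig h2 hxz hq
    rw [Fintype.card_fin] at hge
    exact le_antisymm hle hge
end

section
/- If G is a noncomplete simple graph of order n, then q₂(G) ≥ δ(G), where δ(G) denotes the minimum vertex degree of G. -/
open Matrix SimpleGraph
open scoped Classical

/-! Let `x₁` be an eigenvector of `Q(G)` for `q₁`. The spectral theorem bounds the quadratic form
of `Q(G)` by `q₂ ‖y‖²` on the hyperplane `x₁ᗮ`. For nonadjacent `u ≠ v`, the plane spanned by
`e_u, e_v` meets `x₁ᗮ` in some `y = a e_u + b e_v ≠ 0`, and there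
`yᵀ Q(G) y = a² d(u) + b² d(v) ≥ δ(G) ‖y‖²`, whence `δ(G) ≤ q₂`. -/

theorem Tuple.apply_le_sort_rev_one {α : Type*} [LinearOrder α] {m : ℕ} (f : Fin m → α)
    (hm : 1 < m) {i : Fin m} (hi : i ≠ Tuple.sort f ⟨m - 1, by omega⟩) :
    f i ≤ (f ∘ Tuple.sort f) (Fin.rev ⟨1, hm⟩) := by
  set j := (Tuple.sort f).symm i
  have hj : Tuple.sort f j = i := Equiv.apply_symm_apply _ _
  have hj_le : j ≤ Fin.rev ⟨1, hm⟩ := by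
    have : j.val ≠ m - 1 := fun h => hi (by rw [← hj]; congr 1; exact Fin.ext h)
    rw [Fin.le_def, Fin.val_rev]
    change j.val ≤ m - (1 + 1)
    omega
  simpa [hj] using Tuple.monotone_sort f hj_le

namespace Matrix.IsHermitian

variable {V : Type*} [Fintype V] [DecidableEq V] {M : Matrix V V ℝ}

theorem exists_forall_ne_eigenvalues_le_kthEig_two (hM : M.IsHermitian)
    (hV : 1 < Fintype.card V) :
    ∃ w₀ : V, ∀ w ≠ w₀, hM.eigenvalues w ≤ kthEig M 2 := by
  set e := Fintype.equivFin V
  set f : Fin (Fintype.card V) → ℝ := hM.eigenvalues ∘ e.symm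
  have hkth : kthEig M 2 = (f ∘ Tuple.sort f) (Fin.rev ⟨1, hV⟩) := by
    rw [kthEig, dif_pos hM, dif_pos (by omega)]
  refine ⟨e.symm (Tuple.sort f ⟨Fintype.card V - 1, by omega⟩), fun w hw => ?_⟩
  rw [hkth, show hM.eigenvalues w = f (e w) by simp [f]]
  exact Tuple.apply_le_sort_rev_one f hV fun h => hw (by rw [← h, Equiv.symm_apply_apply])

theorem eigenvectorUnitary_transpose_mulVec (hM : M.IsHermitian) (y : V → ℝ) (w : V) :
    ((hM.eigenvectorUnitary : Matrix V V ℝ)ᵀ *ᵥ y) w = ⇑(hM.eigenvectorBasis w) ⬝ᵥ y :=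
  rfl

theorem dotProduct_self_eq_sum_sq (hM : M.IsHermitian) (y : V → ℝ) :
    y ⬝ᵥ y = ∑ w, (⇑(hM.eigenvectorBasis w) ⬝ᵥ y) ^ 2 := by
  set U : Matrix V V ℝ := (hM.eigenvectorUnitary : Matrix V V ℝ)
  have hUUt : U * Uᵀ = 1 := by
    simpa [U, star_eq_conjTranspose] using mem_unitaryGroup_iff.mp hM.eigenvectorUnitary.2
  simp only [sq, ← eigenvectorUnitary_transpose_mulVec]
  rw [← dotProduct, dotProduct_mulVec, vecMul_transpose, mulVec_mulVec, hUUt, one_mulVec]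

theorem dotProduct_mulVec_eq_sum_eigenvalues (hM : M.IsHermitian) (y : V → ℝ) :
    y ⬝ᵥ (M *ᵥ y) = ∑ w, hM.eigenvalues w * (⇑(hM.eigenvectorBasis w) ⬝ᵥ y) ^ 2 := by
  conv_lhs => rw [hM.spectral_theorem, Unitary.conjStarAlgAut_apply]
  rw [star_eq_conjTranspose, conjTranspose_eq_transpose_of_trivial, ← mulVec_mulVec,
    ← mulVec_mulVec, dotProduct_mulVec, ← mulVec_transpose]
  simp only [dotProduct, mulVec_diagonal, Function.comp_apply, RCLike.ofReal_real_eq_id, id_eq,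
    eigenvectorUnitary_transpose_mulVec]
  exact Finset.sum_congr rfl fun w _ => by ring

theorem dotProduct_mulVec_le_of_eigenvalues_le (hM : M.IsHermitian) {t : ℝ} {w₀ : V}
    (ht : ∀ w ≠ w₀, hM.eigenvalues w ≤ t) {y : V → ℝ}
    (hy : ⇑(hM.eigenvectorBasis w₀) ⬝ᵥ y = 0) :
    y ⬝ᵥ (M *ᵥ y) ≤ t * (y ⬝ᵥ y) := by
  rw [hM.dotProduct_mulVec_eq_sum_eigenvalues, hM.dotProduct_self_eq_sum_sq, Finset.mul_sum]
  refine Finset.sum_le_sum fun w _ => ?_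
  obtain rfl | hw := eq_or_ne w w₀
  · simp [hy]
  · exact mul_le_mul_of_nonneg_right (ht w hw) (sq_nonneg _)

theorem le_kthEig_two_s2 (hM : M.IsHermitian) (hV : 1 < Fintype.card V) {t : ℝ}
    (h : ∀ r : V → ℝ, ∃ y ≠ 0, r ⬝ᵥ y = 0 ∧ t * (y ⬝ᵥ y) ≤ y ⬝ᵥ (M *ᵥ y)) :
    t ≤ kthEig M 2 := by
  obtain ⟨w₀, hw₀⟩ := hM.exists_forall_ne_eigenvalues_le_kthEig_two hV
  obtain ⟨y, hy0, hyr, hty⟩ := h (hM.eigenvectorBasis w₀)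
  have hpos : 0 < y ⬝ᵥ y := by simpa using dotProduct_self_star_pos_iff.mpr hy0
  exact le_of_mul_le_mul_right
    (hty.trans (hM.dotProduct_mulVec_le_of_eigenvalues_le hw₀ hyr)) hpos

end Matrix.IsHermitian

theorem exists_single_add_single_ne_zero_dotProduct_eq_zero {V K : Type*} [Fintype V]
    [DecidableEq V] [Field K] {u v : V} (huv : u ≠ v) (r : V → K) :
    ∃ a b : K, (Pi.single u a + Pi.single v b : V → K) ≠ 0 ∧
      r ⬝ᵥ (Pi.single u a + Pi.single v b) = 0 := by
  by_cases hu : r u = 0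
  · refine ⟨1, 0, fun h => ?_, by simp [hu]⟩
    simpa [huv.symm] using congr_fun h u
  · refine ⟨r v, -r u, fun h => hu ?_, by simp [dotProduct_add, mul_comm]⟩
    simpa [huv] using congr_fun h v

namespace SimpleGraph

variable {V : Type*} [Fintype V] [DecidableEq V] (G : SimpleGraph V) [DecidableRel G.Adj]

theorem signlessLap_isHermitian : (signlessLap G).IsHermitian := by
  rw [Matrix.IsHermitian, conjTranspose_eq_transpose_of_trivial]
  exact (isSymm_degMatrix (R := ℝ) (G := G)).add (isSymm_adjMatrix G)

theorem signlessLap_apply_self (u : V) : signlessLap G u u = G.degree u := by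
  simp [signlessLap, degMatrix]

theorem signlessLap_apply_of_not_adj {u v : V} (huv : u ≠ v) (h : ¬G.Adj u v) :
    signlessLap G u v = 0 := by
  simp [signlessLap, degMatrix, diagonal_apply_ne _ huv, h]

theorem dotProduct_signlessLap_mulVec_single_add_single {u v : V} (huv : u ≠ v)
    (h : ¬G.Adj u v) (a b : ℝ) :
    (Pi.single u a + Pi.single v b) ⬝ᵥ (signlessLap G *ᵥ (Pi.single u a + Pi.single v b)) =
      a ^ 2 * G.degree u + b ^ 2 * G.degree v := by
  simp only [mulVec_add, mulVec_single, add_dotProduct, dotProduct_add, single_dotProduct,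
    Pi.smul_apply, op_smul_eq_mul, col_apply, signlessLap_apply_self,
    G.signlessLap_apply_of_not_adj huv h,
    G.signlessLap_apply_of_not_adj huv.symm fun h' => h h'.symm]
  ring

theorem minDegree_mul_dotProduct_le_of_not_adj {u v : V} (huv : u ≠ v) (h : ¬G.Adj u v)
    (a b : ℝ) :
    G.minDegree * ((Pi.single u a + Pi.single v b) ⬝ᵥ (Pi.single u a + Pi.single v b)) ≤
      (Pi.single u a + Pi.single v b) ⬝ᵥ (signlessLap G *ᵥ (Pi.single u a + Pi.single v b)) := by
  have hnorm : (Pi.single u a + Pi.single v b) ⬝ᵥ (Pi.single u a + Pi.single v b) =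
      a ^ 2 + b ^ 2 := by
    simp [dotProduct_add, huv, huv.symm, sq]
  have hu : (G.minDegree : ℝ) ≤ G.degree u := by exact_mod_cast G.minDegree_le_degree u
  have hv : (G.minDegree : ℝ) ≤ G.degree v := by exact_mod_cast G.minDegree_le_degree v
  rw [hnorm, G.dotProduct_signlessLap_mulVec_single_add_single huv h]
  nlinarith [sq_nonneg a, sq_nonneg b]

end SimpleGraph

/-- If `G` is a noncomplete graph of order `n`, then `q₂(G) ≥ δ(G)`. -/
theorem q2_ge_minDegree (n : ℕ) (G : SimpleGraph (Fin n)) [DecidableRel G.Adj]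
    (hG : G ≠ ⊤) :
    (G.minDegree : ℝ) ≤ qEig G 2 := by
  obtain ⟨u, v, huv, hnadj⟩ := SimpleGraph.ne_top_iff_exists_not_adj.mp hG
  refine G.signlessLap_isHermitian.le_kthEig_two_s2
    (Fintype.one_lt_card_iff_nontrivial.mpr ⟨u, v, huv⟩) fun r => ?_
  obtain ⟨a, b, hy, hyr⟩ := exists_single_add_single_ne_zero_dotProduct_eq_zero huv r
  exact ⟨_, hy, hyr, G.minDegree_mul_dotProduct_le_of_not_adj huv hnadj a b⟩
end
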